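/- arXiv:math-ph/0407042 — 9 statements merged into one kernel-verified Lean document; each statement's English description precedes it below -/
import Mathlib

section
/- If an n×n complex matrix X satisfies X² + c²·I = 0 for some nonzero scalar c, then exp(X) = cos(c)·I + (sin(c)/c)·X. -/
/-- If an `n × n` complex matrix `X` satisfies `X² + c² • I = 0` for some nonzero scalar `c`,
then `exp X = cos c • I + (sin c / c) • X`. -/
theorem exp_of_sq_add_sq_smul_eq_zero {n : ℕ} (X : Matrix (Fin n) (Fin n) ℂ) (c : ℂ)
    (hc : c ≠ 0) (h : X ^ 2 + c ^ 2 • (1 : Matrix (Fin n) (Fin n) ℂ) = 0) :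
    NormedSpace.exp X =
      Complex.cos c • (1 : Matrix (Fin n) (Fin n) ℂ) + (Complex.sin c / c) • X := by
  letI : SeminormedRing (Matrix (Fin n) (Fin n) ℂ) := Matrix.linftyOpSemiNormedRing
  letI : NormedRing (Matrix (Fin n) (Fin n) ℂ) := Matrix.linftyOpNormedRing
  letI : NormedAlgebra ℂ (Matrix (Fin n) (Fin n) ℂ) := Matrix.linftyOpNormedAlgebra
  have h2 : X ^ 2 = (-c ^ 2) • (1 : Matrix (Fin n) (Fin n) ℂ) := by
    rw [neg_smul]
    exact eq_neg_of_add_eq_zero_left h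
  have heven : ∀ k : ℕ, X ^ (2 * k) = ((-1 : ℂ) ^ k * c ^ (2 * k)) • 1 := by
    intro k
    rw [pow_mul, h2, smul_pow, one_pow, neg_pow, ← pow_mul]
  have hodd : ∀ k : ℕ, X ^ (2 * k + 1) = ((-1 : ℂ) ^ k * c ^ (2 * k)) • X := by
    intro k
    rw [pow_succ, heven, smul_mul_assoc, one_mul]
  rw [NormedSpace.exp_eq_tsum (𝕂 := ℂ)]
  refine HasSum.tsum_eq ?_
  refine HasSum.even_add_odd ?_ ?_
  · have hcos := (Complex.hasSum_cos c).smul_const (1 : Matrix (Fin n) (Fin n) ℂ)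
    convert hcos using 2 with k
    case e'_3 => rfl
    rw [heven, smul_smul]
    congr 1
    rw [inv_mul_eq_div]
  · have hsin := ((Complex.hasSum_sin c).div_const c).smul_const X
    convert hsin using 2 with k
    case e'_3 => rfl
    rw [hodd, smul_smul]
    congr 1
    rw [div_right_comm, pow_succ, mul_div_assoc ((-1 : ℂ) ^ k),
      mul_div_cancel_right₀ _ hc, inv_mul_eq_div]
end

section
/- If an n×n real matrix X satisfies X³ = -c²·X for some nonzero real c, then exp(X) = I + (sin(c)/c)·X + ((1 - cos(c))/c²)·X² (Rodrigues's formula). -/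
set_option maxHeartbeats 800000

open scoped Nat

/-- If an `n × n` real matrix `X` satisfies `X³ = -c² • X` for some nonzero real `c`, then
`exp X = I + (sin c / c) • X + ((1 - cos c) / c²) • X²` (Rodrigues's formula). -/
theorem exp_rodrigues {n : ℕ} (X : Matrix (Fin n) (Fin n) ℝ) (c : ℝ) (hc : c ≠ 0)
    (h : X ^ 3 = -(c ^ 2) • X) :
    NormedSpace.exp X =
      (1 : Matrix (Fin n) (Fin n) ℝ) + (Real.sin c / c) • X
        + ((1 - Real.cos c) / c ^ 2) • X ^ 2 := by
  have hodd : ∀ k : ℕ, X ^ (2 * k + 1) = (-(c ^ 2)) ^ k • X := by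
    intro k
    induction k with
    | zero => simp
    | succ k ih =>
      have hX3 : X * X ^ 2 = -(c ^ 2) • X := by
        rw [← h, ← pow_succ']
      have : 2 * (k + 1) + 1 = (2 * k + 1) + 2 := by ring
      rw [this, pow_add, ih, smul_mul_assoc, hX3, smul_smul, ← pow_succ]
  have heven : ∀ k : ℕ, X ^ (2 * (k + 1)) = (-(c ^ 2)) ^ k • X ^ 2 := by
    intro k
    have : 2 * (k + 1) = (2 * k + 1) + 1 := by ring
    rw [this, pow_succ, hodd, smul_mul_assoc, ← sq]
  -- the odd-part scalar series
  have hs : HasSum (fun k : ℕ => (((2 * k + 1)! : ℝ)⁻¹ * (-(c ^ 2)) ^ k))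
      (Real.sin c / c) := by
    have := (Real.hasSum_sin c).div_const c
    convert this using 2 with k
    · rfl
    have h1 : c ^ (2 * k + 1) = c ^ (2 * k) * c := by rw [pow_succ]
    rw [h1]
    have h2 : (-(c ^ 2)) ^ k = (-1 : ℝ) ^ k * c ^ (2 * k) := by
      rw [neg_pow, ← pow_mul]
    rw [h2]
    field_simp
  -- the even-part scalar series (shifted)
  have hcos : HasSum (fun k : ℕ => (((2 * (k + 1))! : ℝ)⁻¹ * (-(c ^ 2)) ^ k))
      ((1 - Real.cos c) / c ^ 2) := by
    have h0 := Real.hasSum_cos c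
    have h1 : HasSum (fun k : ℕ => (-1 : ℝ) ^ (k + 1) * c ^ (2 * (k + 1)) / (2 * (k + 1))!)
        (Real.cos c - 1) := by
      rw [← hasSum_nat_add_iff' 1] at h0
      simpa using h0
    have h2 := (h1.neg.div_const (c ^ 2))
    convert h2 using 2 with k
    · rfl
    have h3 : c ^ (2 * (k + 1)) = c ^ (2 * k) * c ^ 2 := by rw [← pow_add]; ring_nf
    have h4 : (-(c ^ 2)) ^ k = (-1 : ℝ) ^ k * c ^ (2 * k) := by
      rw [neg_pow, ← pow_mul]
    rw [h3, h4, pow_succ]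
    have hc2 : (c : ℝ) ^ 2 ≠ 0 := pow_ne_zero _ hc
    field_simp
    ring
  rw [NormedSpace.exp_eq_tsum ℝ]
  refine HasSum.tsum_eq ?_
  have hXodd : HasSum (fun k : ℕ => (((2 * k + 1)! : ℝ)⁻¹ : ℝ) • X ^ (2 * k + 1))
      ((Real.sin c / c) • X) := by
    have := hs.smul_const X
    convert this using 2 with k
    rw [hodd, smul_smul]
  have hXeven : HasSum (fun k : ℕ => (((2 * k)! : ℝ)⁻¹ : ℝ) • X ^ (2 * k))
      (((1 - Real.cos c) / c ^ 2) • X ^ 2 + 1) := by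
    have h1 : HasSum (fun k : ℕ => (((2 * (k + 1))! : ℝ)⁻¹ : ℝ) • X ^ (2 * (k + 1)))
        (((1 - Real.cos c) / c ^ 2) • X ^ 2) := by
      have := hcos.smul_const (X ^ 2)
      convert this using 2 with k
      rw [heven, smul_smul]
    have h2 := (hasSum_nat_add_iff
      (f := fun k : ℕ => (((2 * k)! : ℝ)⁻¹ : ℝ) • X ^ (2 * k)) 1).mp h1
    simpa using h2
  have key : HasSum (fun m : ℕ => ((m ! : ℝ)⁻¹ : ℝ) • X ^ m)
      ((((1 - Real.cos c) / c ^ 2) • X ^ 2 + 1) + (Real.sin c / c) • X) :=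
    HasSum.even_add_odd (f := fun m : ℕ => ((m ! : ℝ)⁻¹ : ℝ) • X ^ m) hXeven hXodd
  convert key using 1
  · rfl
  abel
end

section
/- If an n×n matrix X satisfies X² = λ²·I for a nonzero scalar λ, then exp(X) = cosh(λ)·I + (sinh(λ)/λ)·X. -/
set_option maxHeartbeats 1000000 in

/-- If an `n × n` real matrix `X` satisfies `X² = λ² • I` for a nonzero scalar `λ`, then
`exp X = cosh λ • I + (sinh λ / λ) • X`. -/
theorem exp_of_sq_eq_smul_one {n : ℕ} (X : Matrix (Fin n) (Fin n) ℝ) (lam : ℝ)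
    (hlam : lam ≠ 0) (h : X ^ 2 = lam ^ 2 • (1 : Matrix (Fin n) (Fin n) ℝ)) :
    NormedSpace.exp X =
      Real.cosh lam • (1 : Matrix (Fin n) (Fin n) ℝ) + (Real.sinh lam / lam) • X := by
  have hpow : ∀ k : ℕ, X ^ (2 * k) = (lam ^ (2 * k)) • (1 : Matrix (Fin n) (Fin n) ℝ) := by
    intro k
    rw [pow_mul, h, smul_pow, one_pow, ← pow_mul]
  have heven : HasSum (fun k : ℕ => (Nat.factorial (2 * k) : ℝ)⁻¹ • X ^ (2 * k))
      (Real.cosh lam • (1 : Matrix (Fin n) (Fin n) ℝ)) := by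
    have := (Real.hasSum_cosh lam).smul_const (1 : Matrix (Fin n) (Fin n) ℝ)
    refine this.congr_fun fun k => ?_
    rw [hpow, smul_smul, div_eq_inv_mul, mul_comm]
  have hodd : HasSum (fun k : ℕ => (Nat.factorial (2 * k + 1) : ℝ)⁻¹ • X ^ (2 * k + 1))
      ((Real.sinh lam / lam) • X) := by
    have := ((Real.hasSum_sinh lam).div_const lam).smul_const X
    refine this.congr_fun fun k => ?_
    rw [pow_succ, hpow, smul_mul_assoc, one_mul, smul_smul]
    congr 1
    field_simp
    ring
  have hsum : HasSum (fun k : ℕ => (Nat.factorial k : ℝ)⁻¹ • X ^ k)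
      (Real.cosh lam • (1 : Matrix (Fin n) (Fin n) ℝ) + (Real.sinh lam / lam) • X) :=
    heven.even_add_odd hodd
  rw [NormedSpace.exp_eq_tsum (𝕂 := ℝ)]
  exact hsum.tsum_eq
end

section
/- Every 4×4 real skew-symmetric matrix is the matrix (in the basis {1,i,j,k} of H) of a map x ↦ p·x + x·(-q) for some pure quaternions p and q, i.e., corresponds to an element p⊗1 + 1⊗q with p, q pure, under the H⊗H correspondence. -/
open Quaternion Matrix

/-- The basis `{1, i, j, k}` of the quaternions over `ℝ`, identifying `ℍ ≅ ℝ⁴`. -/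
noncomputable def qBasis : Module.Basis (Fin 4) ℝ ℍ := QuaternionAlgebra.basisOneIJK (-1) 0 (-1)

/-- The `4 × 4` real matrix of a real-linear endomorphism of `ℍ` in the basis `{1, i, j, k}`. -/
noncomputable def toMat (f : ℍ →ₗ[ℝ] ℍ) : Matrix (Fin 4) (Fin 4) ℝ :=
  LinearMap.toMatrix qBasis qBasis f

/-- `Mq p q` is the `4 × 4` real matrix of the map `x ↦ p * x * conj q` on `ℍ ≅ ℝ⁴`. -/
noncomputable def Mq (p q : ℍ) : Matrix (Fin 4) (Fin 4) ℝ :=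
  toMat ((LinearMap.mulLeft ℝ p).comp (LinearMap.mulRight ℝ (star q)))

lemma qBasis_repr (x : ℍ) : ⇑(qBasis.repr x) = ![x.re, x.imI, x.imJ, x.imK] :=
  rfl

lemma qBasis_apply (i : Fin 4) :
    qBasis i = (![1, (⟨0,1,0,0⟩ : ℍ), ⟨0,0,1,0⟩, ⟨0,0,0,1⟩] : Fin 4 → ℍ) i := by
  apply qBasis.repr.injective
  rw [Module.Basis.repr_self]
  ext j
  fin_cases i <;> fin_cases j <;>
    simp [qBasis_repr, Finsupp.single_apply, Quaternion.re_one, Quaternion.imI_one,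
      Quaternion.imJ_one, Quaternion.imK_one] <;> rfl

lemma qBasis_re (i : Fin 4) : (qBasis i).re = ![1, 0, 0, 0] i := by
  rw [qBasis_apply]; fin_cases i <;> rfl

lemma qBasis_imI (i : Fin 4) : (qBasis i).imI = ![0, 1, 0, 0] i := by
  rw [qBasis_apply]; fin_cases i <;> rfl

lemma qBasis_imJ (i : Fin 4) : (qBasis i).imJ = ![0, 0, 1, 0] i := by
  rw [qBasis_apply]; fin_cases i <;> rfl

lemma qBasis_imK (i : Fin 4) : (qBasis i).imK = ![0, 0, 0, 1] i := by
  rw [qBasis_apply]; fin_cases i <;> rfl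

/-- Every `4 × 4` real skew-symmetric matrix is the matrix, in the basis `{1, i, j, k}` of `ℍ`,
of a map `x ↦ p * x + x * (-q)` for some pure quaternions `p` and `q`. -/
theorem skew_symm_eq_quaternion_rep (A : Matrix (Fin 4) (Fin 4) ℝ) (hA : Aᵀ = -A) :
    ∃ p q : ℍ, p.re = 0 ∧ q.re = 0 ∧
      A = toMat (LinearMap.mulLeft ℝ p + LinearMap.mulRight ℝ (-q)) := by
  have h : ∀ i j, A j i = - A i j := fun i j => by
    have := congrFun (congrFun hA i) j
    simpa [Matrix.transpose_apply] using this
  obtain ⟨p, hp0, hp1, hp2, hp3⟩ : ∃ p : ℍ, p.re = 0 ∧ p.imI = -(A 0 1 + A 2 3)/2 ∧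
      p.imJ = (A 1 3 - A 0 2)/2 ∧ p.imK = -(A 0 3 + A 1 2)/2 :=
    ⟨⟨0, -(A 0 1 + A 2 3)/2, (A 1 3 - A 0 2)/2, -(A 0 3 + A 1 2)/2⟩, rfl, rfl, rfl, rfl⟩
  obtain ⟨q, hq0, hq1, hq2, hq3⟩ : ∃ q : ℍ, q.re = 0 ∧ q.imI = (A 0 1 - A 2 3)/2 ∧
      q.imJ = (A 1 3 + A 0 2)/2 ∧ q.imK = (A 0 3 - A 1 2)/2 :=
    ⟨⟨0, (A 0 1 - A 2 3)/2, (A 1 3 + A 0 2)/2, (A 0 3 - A 1 2)/2⟩, rfl, rfl, rfl, rfl⟩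
  refine ⟨p, q, hp0, hq0, ?_⟩
  ext i j
  rw [toMat, LinearMap.toMatrix_apply]
  fin_cases i <;> fin_cases j <;>
    simp [LinearMap.mulLeft_apply, LinearMap.mulRight_apply,
      qBasis_re, qBasis_imI, qBasis_imJ, qBasis_imK, qBasis_repr,
      Quaternion.re_mul, Quaternion.imI_mul, Quaternion.imJ_mul, Quaternion.imK_mul,
      hp0, hp1, hp2, hp3, hq0, hq1, hq2, hq3] <;>
    linarith [h 0 0, h 1 1, h 2 2, h 3 3, h 0 1, h 0 2, h 0 3, h 1 2, h 1 3, h 2 3]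
end

section
/- Let T be a 4×4 real skew-symmetric matrix written as T = T₁ + T₂ where T₁ is the matrix of x ↦ s·x and T₂ is the matrix of x ↦ -x·t with s, t pure quaternions. Then T satisfies T⁴ + 2(‖s‖² + ‖t‖²)·T² + (‖s‖² - ‖t‖²)²·I = 0. -/
open Quaternion

/-- A pure quaternion squares to `-‖s‖²`. -/
lemma pure_sq (s : ℍ) (hs : s.re = 0) : s * s = ((-(‖s‖ ^ 2) : ℝ) : ℍ) := by
  have h1 : star s = -s := by ext <;> simp [hs]
  have h := Quaternion.self_mul_star s
  rw [h1, mul_neg, neg_eq_iff_eq_neg] at h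
  rw [h, Quaternion.normSq_eq_norm_mul_self]
  push_cast
  rw [sq]

/-- The quartic identity at the level of endomorphisms of `ℍ`. -/
lemma end_quartic_identity (s t : ℍ) (hs : s.re = 0) (ht : t.re = 0) :
    (LinearMap.mulLeft ℝ s + LinearMap.mulRight ℝ (-t)) ^ 4
      + (2 * (‖s‖ ^ 2 + ‖t‖ ^ 2)) • (LinearMap.mulLeft ℝ s + LinearMap.mulRight ℝ (-t)) ^ 2
      + (‖s‖ ^ 2 - ‖t‖ ^ 2) ^ 2 • (1 : ℍ →ₗ[ℝ] ℍ) = 0 := by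
  set a := ‖s‖ ^ 2 with ha
  set b := ‖t‖ ^ 2 with hb
  set L := LinearMap.mulLeft ℝ s with hLdef
  set R := LinearMap.mulRight ℝ (-t) with hRdef
  have hLR : R * L = L * R := (LinearMap.commute_mulLeft_right (R := ℝ) s (-t)).symm
  have hL : L * L = (-a) • 1 := by
    refine LinearMap.ext fun x => ?_
    simp only [hLdef, Module.End.mul_apply, LinearMap.mulLeft_apply, ← mul_assoc,
      pure_sq s hs, Quaternion.coe_mul_eq_smul, LinearMap.smul_apply, Module.End.one_apply, ha]
  have hR : R * R = (-b) • 1 := by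
    refine LinearMap.ext fun x => ?_
    have h3 : x * -t * -t = x * (t * t) := by noncomm_ring
    simp only [hRdef, Module.End.mul_apply, LinearMap.mulRight_apply, h3,
      pure_sq t ht, Quaternion.mul_coe_eq_smul, LinearMap.smul_apply, Module.End.one_apply, hb]
  have h2 : (L + R) ^ 2 = (2:ℝ) • (L * R) - (a + b) • 1 := by
    rw [sq, add_mul, mul_add, mul_add, hL, hR, hLR]
    module
  have hC2 : (L * R) * (L * R) = (a * b) • 1 := by
    calc (L * R) * (L * R) = L * (R * L) * R := by noncomm_ring
    _ = (L * L) * (R * R) := by rw [hLR]; noncomm_ring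
    _ = (a * b) • 1 := by rw [hL, hR, smul_mul_smul_comm, one_mul]; module
  have h4 : (L + R) ^ 4 = ((L + R) ^ 2) ^ 2 := by rw [← pow_mul]
  rw [h4, h2, sq, sub_mul, mul_sub, mul_sub]
  simp only [smul_mul_assoc, mul_smul_comm, hC2, smul_smul, one_mul, mul_one]
  module

/-- If `T = T₁ + T₂` with `T₁` the matrix of `x ↦ s * x` and `T₂` the matrix of `x ↦ -x * t`
for pure quaternions `s, t`, then `T⁴ + 2(‖s‖² + ‖t‖²) T² + (‖s‖² - ‖t‖²)² I = 0`. -/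
theorem skew_quartic_identity (s t : ℍ) (hs : s.re = 0) (ht : t.re = 0) :
    (toMat (LinearMap.mulLeft ℝ s) + toMat (LinearMap.mulRight ℝ (-t))) ^ 4
      + (2 * (‖s‖ ^ 2 + ‖t‖ ^ 2)) •
        (toMat (LinearMap.mulLeft ℝ s) + toMat (LinearMap.mulRight ℝ (-t))) ^ 2
      + (‖s‖ ^ 2 - ‖t‖ ^ 2) ^ 2 • (1 : Matrix (Fin 4) (Fin 4) ℝ) = 0 := by
  have key := end_quartic_identity s t hs ht
  have hmat : ∀ f : ℍ →ₗ[ℝ] ℍ, toMat f = LinearMap.toMatrixAlgEquiv qBasis f := fun f => rfl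
  calc (toMat (LinearMap.mulLeft ℝ s) + toMat (LinearMap.mulRight ℝ (-t))) ^ 4
      + (2 * (‖s‖ ^ 2 + ‖t‖ ^ 2)) •
        (toMat (LinearMap.mulLeft ℝ s) + toMat (LinearMap.mulRight ℝ (-t))) ^ 2
      + (‖s‖ ^ 2 - ‖t‖ ^ 2) ^ 2 • (1 : Matrix (Fin 4) (Fin 4) ℝ)
      = LinearMap.toMatrixAlgEquiv qBasis
          ((LinearMap.mulLeft ℝ s + LinearMap.mulRight ℝ (-t)) ^ 4
            + (2 * (‖s‖ ^ 2 + ‖t‖ ^ 2)) •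
              (LinearMap.mulLeft ℝ s + LinearMap.mulRight ℝ (-t)) ^ 2
            + (‖s‖ ^ 2 - ‖t‖ ^ 2) ^ 2 • (1 : ℍ →ₗ[ℝ] ℍ)) := by
        simp only [map_add, map_smul, map_pow, map_one, hmat]
    _ = 0 := by rw [key, map_zero]
end

section
/- Let T₁ be the matrix of x ↦ s·x and T₂ the matrix of x ↦ -x·t on H ≅ ℝ⁴ with s, t nonzero pure quaternions and ‖s‖ ≠ ‖t‖, and let S be a 4×4 real matrix commuting with T = T₁ + T₂. Then S commutes with both T₁ and T₂. -/
open Quaternion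

/-- If `s, t` are nonzero pure quaternions with `‖s‖ ≠ ‖t‖`, `T₁` is the matrix of `x ↦ s * x`,
`T₂` the matrix of `x ↦ -x * t`, and `S` commutes with `T₁ + T₂`, then `S` commutes with both
`T₁` and `T₂`. -/
theorem commute_with_parts (s t : ℍ) (hs : s.re = 0) (ht : t.re = 0)
    (hs0 : s ≠ 0) (ht0 : t ≠ 0) (hst : ‖s‖ ≠ ‖t‖)
    (S : Matrix (Fin 4) (Fin 4) ℝ)
    (hcomm : S * (toMat (LinearMap.mulLeft ℝ s) + toMat (LinearMap.mulRight ℝ (-t)))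
      = (toMat (LinearMap.mulLeft ℝ s) + toMat (LinearMap.mulRight ℝ (-t))) * S) :
    S * toMat (LinearMap.mulLeft ℝ s) = toMat (LinearMap.mulLeft ℝ s) * S ∧
      S * toMat (LinearMap.mulRight ℝ (-t)) = toMat (LinearMap.mulRight ℝ (-t)) * S := by
  set A := toMat (LinearMap.mulLeft ℝ s) with hAdef
  set B := toMat (LinearMap.mulRight ℝ (-t)) with hBdef
  have toMatComp : ∀ f g : ℍ →ₗ[ℝ] ℍ, toMat (f.comp g) = toMat f * toMat g := fun f g => by
    simp [toMat, LinearMap.toMatrix_comp qBasis qBasis qBasis]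
  have toMatSmulId : ∀ r : ℝ,
      toMat (r • LinearMap.id) = r • (1 : Matrix (Fin 4) (Fin 4) ℝ) := fun r => by
    simp [toMat]
  -- pure quaternions square to a negative scalar
  have sq_pure : ∀ u : ℍ, u.re = 0 → u * u = ((-(normSq u) : ℝ) : ℍ) := by
    intro u hu
    have h : star u = -u := by ext <;> simp [hu]
    have h2 := Quaternion.self_mul_star u
    rw [h] at h2
    push_cast
    rw [← h2, mul_neg, neg_neg]
  have hss : s * s = ((-(normSq s) : ℝ) : ℍ) := sq_pure s hs
  have htt : (-t) * (-t) = ((-(normSq t) : ℝ) : ℍ) := by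
    rw [neg_mul_neg]; exact sq_pure t ht
  -- structural matrix identities
  have hA2 : A * A = (-(normSq s)) • (1 : Matrix (Fin 4) (Fin 4) ℝ) := by
    rw [hAdef, ← toMatComp, ← LinearMap.mulLeft_mul, hss,
      show LinearMap.mulLeft ℝ (((-(normSq s) : ℝ)) : ℍ) = (-(normSq s)) • LinearMap.id from by
        ext x : 1; simp [Quaternion.coe_mul_eq_smul]]
    exact toMatSmulId _
  have hB2 : B * B = (-(normSq t)) • (1 : Matrix (Fin 4) (Fin 4) ℝ) := by
    rw [hBdef, ← toMatComp, ← LinearMap.mulRight_mul, htt,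
      show LinearMap.mulRight ℝ (((-(normSq t) : ℝ)) : ℍ) = (-(normSq t)) • LinearMap.id from by
        ext x : 1
        simp [LinearMap.mulRight_apply, ← Quaternion.coe_commutes, Quaternion.coe_mul_eq_smul]]
    exact toMatSmulId _
  have hAB : A * B = B * A := by
    rw [hAdef, hBdef, ← toMatComp, ← toMatComp,
      show (LinearMap.mulLeft ℝ s).comp (LinearMap.mulRight ℝ (-t))
          = (LinearMap.mulRight ℝ (-t)).comp (LinearMap.mulLeft ℝ s) from by
        ext x : 1; simp [mul_assoc]]
  -- the commutation argument
  have hT : Commute S (A + B) := hcomm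
  have h1 : Commute S ((A + B) * (A + B)) := hT.mul_right hT
  have hexp : (A + B) * (A + B)
      = ((-(normSq s)) + (-(normSq t))) • (1 : Matrix (Fin 4) (Fin 4) ℝ) + (2 : ℝ) • (A * B) := by
    have e : (A + B) * (A + B) = A * A + B * B + (A * B + B * A) := by noncomm_ring
    rw [e, hA2, hB2, ← hAB, add_smul, ← two_smul ℝ (A * B)]
  have hABc : Commute S (A * B) := by
    have hone : Commute S ((((-(normSq s)) + (-(normSq t))) : ℝ)
        • (1 : Matrix (Fin 4) (Fin 4) ℝ)) := (Commute.one_right S).smul_right _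
    rw [hexp] at h1
    have h2 : Commute S ((2 : ℝ) • (A * B)) := by simpa using h1.sub_right hone
    have h3 := h2.eq
    rw [mul_smul_comm, smul_mul_assoc] at h3
    exact smul_right_injective (Matrix (Fin 4) (Fin 4) ℝ) (two_ne_zero) h3
  have h4 : Commute S ((A + B) * (A * B)) := hT.mul_right hABc
  have hexp2 : (A + B) * (A * B) = (-(normSq s)) • B + (-(normSq t)) • A := by
    have e : (A + B) * (A * B) = A * A * B + (B * A) * B := by noncomm_ring
    rw [e, ← hAB, mul_assoc A B B, hA2, hB2]
    simp [smul_mul_assoc, mul_smul_comm]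
  rw [hexp2] at h4
  have h5 : Commute S ((-(normSq s)) • (A + B)) := hT.smul_right _
  have h6 : Commute S (((-(normSq s)) - (-(normSq t))) • A) := by
    have h7 := h5.sub_right h4
    have e2 : (-(normSq s)) • (A + B) - ((-(normSq s)) • B + (-(normSq t)) • A)
        = ((-(normSq s)) - (-(normSq t))) • A := by module
    rwa [e2] at h7
  have hr : (-(normSq s)) - (-(normSq t)) ≠ 0 := by
    intro h
    apply hst
    have hn : normSq s = normSq t := by linarith
    have h2 : ‖s‖ ^ 2 = ‖t‖ ^ 2 := by
      rw [sq, sq, ← Quaternion.normSq_eq_norm_mul_self, ← Quaternion.normSq_eq_norm_mul_self, hn]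
    rw [← Real.sqrt_sq (norm_nonneg s), ← Real.sqrt_sq (norm_nonneg t), h2]
  have hSA : Commute S A := by
    have h8 := h6.eq
    rw [mul_smul_comm, smul_mul_assoc] at h8
    exact smul_right_injective (Matrix (Fin 4) (Fin 4) ℝ) hr h8
  refine ⟨hSA, ?_⟩
  have h9 := hT.sub_right hSA
  simpa using h9.eq
end

section
/- For pure quaternions u, v with u, v ≠ 0, the 4×4 real matrix M of the map x ↦ u·x·conj(v) satisfies M² = ‖u‖²‖v‖²·I, and hence exp(M) = cosh(‖u‖‖v‖)·I + (sinh(‖u‖‖v‖)/(‖u‖‖v‖))·M. -/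
open Quaternion
open scoped Nat

lemma exp_smul_idem (P : Matrix (Fin 4) (Fin 4) ℝ) (hP : P * P = P) (c : ℝ) :
    NormedSpace.exp (c • P) = 1 + (Real.exp c - 1) • P := by
  letI : SeminormedRing (Matrix (Fin 4) (Fin 4) ℝ) := Matrix.linftyOpSemiNormedRing
  letI : NormedRing (Matrix (Fin 4) (Fin 4) ℝ) := Matrix.linftyOpNormedRing
  letI : NormedAlgebra ℝ (Matrix (Fin 4) (Fin 4) ℝ) := Matrix.linftyOpNormedAlgebra
  have hPn : ∀ n : ℕ, P ^ (n + 1) = P := by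
    intro n
    induction n with
    | zero => simp
    | succ k ih => rw [pow_succ, ih, hP]
  have hsum : Summable fun n : ℕ => ((n ! : ℝ))⁻¹ • (c • P) ^ n :=
    NormedSpace.expSeries_summable' (𝕂 := ℝ) (c • P)
  have hsum2 : Summable fun n : ℕ => c ^ (n + 1) / (n + 1)! :=
    (summable_nat_add_iff 1).mpr (Real.summable_pow_div_factorial c)
  have hsum3 : Summable fun n : ℕ => c ^ n / n ! := Real.summable_pow_div_factorial c
  rw [NormedSpace.exp_eq_tsum ℝ]
  beta_reduce
  rw [Summable.tsum_eq_zero_add hsum]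
  have h0 : ((0 ! : ℝ))⁻¹ • (c • P) ^ 0 = 1 := by simp
  have hterm : ∀ n : ℕ, (((n + 1)! : ℝ))⁻¹ • (c • P) ^ (n + 1)
      = (c ^ (n + 1) / (n + 1)!) • P := by
    intro n
    rw [smul_pow, hPn, smul_smul, div_eq_inv_mul, mul_comm]
  rw [h0]
  congr 1
  rw [tsum_congr hterm, Summable.tsum_smul_const hsum2]
  congr 1
  have hc : Real.exp c = ∑' n : ℕ, c ^ n / n ! := by
    rw [Real.exp_eq_exp_ℝ, NormedSpace.exp_eq_tsum_div]
  rw [hc, Summable.tsum_eq_zero_add hsum3]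
  simp

lemma exp_of_sq (M : Matrix (Fin 4) (Fin 4) ℝ) (r : ℝ) (hr : 0 < r)
    (h : M ^ 2 = (r ^ 2) • 1) :
    NormedSpace.exp M = Real.cosh r • 1 + (Real.sinh r / r) • M := by
  have hr0 : r ≠ 0 := hr.ne'
  have hM2 : M * M = (r ^ 2) • 1 := by rw [← sq]; exact h
  set P : Matrix (Fin 4) (Fin 4) ℝ := (1 / 2 : ℝ) • 1 + (2 * r)⁻¹ • M with hPdef
  set Q : Matrix (Fin 4) (Fin 4) ℝ := (1 / 2 : ℝ) • 1 - (2 * r)⁻¹ • M with hQdef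
  have hPP : P * P = P := by
    rw [hPdef]
    rw [add_mul, mul_add, mul_add, smul_mul_smul_comm, smul_mul_smul_comm,
      smul_mul_smul_comm, smul_mul_smul_comm, hM2, smul_smul]
    simp only [one_mul, mul_one]
    match_scalars <;> field_simp [hr0] <;> ring
  have hQQ : Q * Q = Q := by
    rw [hQdef]
    rw [sub_mul, mul_sub, mul_sub, smul_mul_smul_comm, smul_mul_smul_comm,
      smul_mul_smul_comm, smul_mul_smul_comm, hM2, smul_smul]
    simp only [one_mul, mul_one]
    match_scalars <;> field_simp [hr0] <;> ring
  have hPQ : P * Q = 0 := by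
    rw [hPdef, hQdef]
    rw [add_mul, mul_sub, mul_sub, smul_mul_smul_comm, smul_mul_smul_comm,
      smul_mul_smul_comm, smul_mul_smul_comm, hM2, smul_smul]
    simp only [one_mul, mul_one]
    match_scalars <;> field_simp [hr0] <;> ring
  have hM : M = r • P + (-r) • Q := by
    rw [hPdef, hQdef]
    match_scalars <;> field_simp [hr0] <;> ring
  have hcomm : Commute (r • P) ((-r) • Q) := by
    have hc : Commute P Q := by
      have hq : Q = 1 - P := by rw [hPdef, hQdef]; module
      rw [hq]
      exact (Commute.one_right P).sub_right (Commute.refl P)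
    exact (hc.smul_left r).smul_right (-r)
  rw [hM, Matrix.exp_add_of_commute _ _ hcomm, exp_smul_idem P hPP, exp_smul_idem Q hQQ]
  rw [add_mul, mul_add, mul_add]
  simp only [one_mul, mul_one]
  rw [smul_mul_smul_comm, hPQ, smul_zero]
  rw [hPdef, hQdef]
  have hcosh : Real.cosh r = (Real.exp r + Real.exp (-r)) / 2 := Real.cosh_eq r
  have hsinh : Real.sinh r = (Real.exp r - Real.exp (-r)) / 2 := Real.sinh_eq r
  rw [hcosh, hsinh]
  match_scalars <;> field_simp [hr0] <;> ring

/-- For nonzero pure quaternions `u, v`, the matrix `M` of `x ↦ u * x * conj v` satisfies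
`M² = ‖u‖² ‖v‖² • I` and `exp M = cosh (‖u‖‖v‖) • I + (sinh (‖u‖‖v‖) / (‖u‖‖v‖)) • M`. -/
theorem exp_Mq_pure (u v : ℍ) (hu : u.re = 0) (hv : v.re = 0) (hu0 : u ≠ 0) (hv0 : v ≠ 0) :
    (Mq u v) ^ 2 = (‖u‖ ^ 2 * ‖v‖ ^ 2) • (1 : Matrix (Fin 4) (Fin 4) ℝ) ∧
    NormedSpace.exp (Mq u v) =
      Real.cosh (‖u‖ * ‖v‖) • (1 : Matrix (Fin 4) (Fin 4) ℝ)
        + (Real.sinh (‖u‖ * ‖v‖) / (‖u‖ * ‖v‖)) • Mq u v := by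
  have hnu : ((normSq u : ℝ) : ℍ) = ((‖u‖ ^ 2 : ℝ) : ℍ) := by
    rw [normSq_eq_norm_mul_self, sq]
  have hnv : ((normSq v : ℝ) : ℍ) = ((‖v‖ ^ 2 : ℝ) : ℍ) := by
    rw [normSq_eq_norm_mul_self, sq]
  have husq : u * u = -((‖u‖ ^ 2 : ℝ) : ℍ) := by
    have h1 : star u = -u := star_eq_neg.mpr hu
    have h2 : -(u * u) = ((normSq u : ℝ) : ℍ) := by rw [← mul_neg, ← h1, self_mul_star]
    rw [← hnu, ← h2, neg_neg]
  have hvsq : star v * star v = -((‖v‖ ^ 2 : ℝ) : ℍ) := by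
    have h1 : star v = -v := star_eq_neg.mpr hv
    have h2 : -(v * v) = ((normSq v : ℝ) : ℍ) := by rw [← mul_neg, ← h1, self_mul_star]
    rw [h1, neg_mul_neg, ← hnv, ← h2, neg_neg]
  have hsq : (Mq u v) ^ 2 = (‖u‖ ^ 2 * ‖v‖ ^ 2) • (1 : Matrix (Fin 4) (Fin 4) ℝ) := by
    rw [sq, Mq, toMat, ← LinearMap.toMatrix_comp]
    have hcomp : ((LinearMap.mulLeft ℝ u).comp (LinearMap.mulRight ℝ (star v))).comp
        ((LinearMap.mulLeft ℝ u).comp (LinearMap.mulRight ℝ (star v)))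
        = (‖u‖ ^ 2 * ‖v‖ ^ 2) • LinearMap.id := by
      refine LinearMap.ext fun x => ?_
      simp only [LinearMap.comp_apply, LinearMap.mulLeft_apply, LinearMap.mulRight_apply,
        LinearMap.smul_apply, LinearMap.id_apply]
      have hassoc : u * (u * (x * star v) * star v) = (u * u) * x * (star v * star v) := by
        simp only [mul_assoc]
      rw [hassoc, husq, hvsq]
      simp only [neg_mul, mul_neg, neg_neg]
      rw [coe_mul_eq_smul, mul_coe_eq_smul, smul_smul, mul_comm]
    rw [hcomp, map_smul, LinearMap.toMatrix_id]
  refine ⟨hsq, ?_⟩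
  have hr : 0 < ‖u‖ * ‖v‖ :=
    mul_pos (norm_pos_iff.mpr hu0) (norm_pos_iff.mpr hv0)
  exact exp_of_sq _ _ hr (by rw [hsq, mul_pow])
end

section
/- Let u₁,u₂,u₃ and v₁,v₂,v₃ each be triples of pairwise orthogonal pure quaternions, and let Mᵢ be the 4×4 matrix of x ↦ uᵢ·x·conj(vᵢ). Then the Mᵢ pairwise commute, and for any real a, exp(a·I + M₁ + M₂ + M₃) = e^a · exp(M₁)·exp(M₂)·exp(M₃). -/
open Quaternion

open scoped RealInnerProductSpace

lemma pure_orth_anticomm (p q : ℍ) (hp : p.re = 0) (hq : q.re = 0)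
    (h : ⟪p, q⟫ = 0) : p * q = -(q * p) := by
  rw [Quaternion.inner_def] at h
  ext <;>
    simp only [Quaternion.re_mul, Quaternion.imI_mul, Quaternion.imJ_mul, Quaternion.imK_mul,
      Quaternion.re_star, Quaternion.imI_star, Quaternion.imJ_star, Quaternion.imK_star,
      Quaternion.re_neg, Quaternion.imI_neg, Quaternion.imJ_neg, Quaternion.imK_neg,
      hp, hq] at h ⊢ <;> linarith

lemma Mq_comm (p q r s : ℍ) (hp : p.re = 0) (hr : r.re = 0) (hq : q.re = 0) (hs : s.re = 0)
    (hpr : ⟪p, r⟫ = 0) (hqs : ⟪q, s⟫ = 0) :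
    Mq p q * Mq r s = Mq r s * Mq p q := by
  have key : ∀ x : ℍ, p * (r * x * star s) * star q = r * (p * x * star q) * star s := by
    intro x
    have h1 : p * r = -(r * p) := pure_orth_anticomm p r hp hr hpr
    have h2 : q * s = -(s * q) := pure_orth_anticomm q s hq hs hqs
    have h2' : star s * star q = -(star q * star s) := by
      have := congrArg star h2
      simpa [star_mul, mul_comm] using this
    calc p * (r * x * star s) * star q = (p * r) * (x * (star s * star q)) := by simp only [mul_assoc]
      _ = (-(r * p)) * (x * (-(star q * star s))) := by rw [h1, h2']
      _ = (r * p) * (x * (star q * star s)) := by simp only [neg_mul, mul_neg, neg_neg]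
      _ = r * (p * x * star q) * star s := by simp only [mul_assoc]
  unfold Mq toMat
  rw [← LinearMap.toMatrix_comp qBasis qBasis qBasis, ← LinearMap.toMatrix_comp qBasis qBasis qBasis]
  congr 1
  apply LinearMap.ext
  intro x
  simpa [mul_assoc] using key x

/-- If `u₁, u₂, u₃` and `v₁, v₂, v₃` are each triples of pairwise orthogonal pure quaternions,
then the matrices `Mᵢ` of `x ↦ uᵢ * x * conj vᵢ` pairwise commute, and for any real `a`,
`exp (a • I + M₁ + M₂ + M₃) = e^a • exp M₁ * exp M₂ * exp M₃`. -/
theorem exp_orthogonal_triple (u v : Fin 3 → ℍ)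
    (hu_re : ∀ i, (u i).re = 0) (hv_re : ∀ i, (v i).re = 0)
    (hu_orth : ∀ i j, i ≠ j → ⟪u i, u j⟫ = 0)
    (hv_orth : ∀ i j, i ≠ j → ⟪v i, v j⟫ = 0) (a : ℝ) :
    (∀ i j, Mq (u i) (v i) * Mq (u j) (v j) = Mq (u j) (v j) * Mq (u i) (v i)) ∧
    NormedSpace.exp
        (a • (1 : Matrix (Fin 4) (Fin 4) ℝ) + Mq (u 0) (v 0) + Mq (u 1) (v 1) + Mq (u 2) (v 2)) =
      Real.exp a •
        (NormedSpace.exp (Mq (u 0) (v 0)) * NormedSpace.exp (Mq (u 1) (v 1))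
          * NormedSpace.exp (Mq (u 2) (v 2))) := by
  have hcomm : ∀ i j, Mq (u i) (v i) * Mq (u j) (v j) = Mq (u j) (v j) * Mq (u i) (v i) := by
    intro i j
    rcases eq_or_ne i j with rfl | hij
    · rfl
    · exact Mq_comm _ _ _ _ (hu_re i) (hu_re j) (hv_re i) (hv_re j)
        (hu_orth i j hij) (hv_orth i j hij)
  refine ⟨hcomm, ?_⟩
  set M0 := Mq (u 0) (v 0)
  set M1 := Mq (u 1) (v 1)
  set M2 := Mq (u 2) (v 2)
  have c01 : Commute M0 M1 := hcomm 0 1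
  have c02 : Commute M0 M2 := hcomm 0 2
  have c12 : Commute M1 M2 := hcomm 1 2
  have cA : Commute (a • (1 : Matrix (Fin 4) (Fin 4) ℝ)) M0 := (Commute.one_left M0).smul_left a
  have cA1 : Commute (a • (1 : Matrix (Fin 4) (Fin 4) ℝ)) M1 := (Commute.one_left M1).smul_left a
  have cA2 : Commute (a • (1 : Matrix (Fin 4) (Fin 4) ℝ)) M2 := (Commute.one_left M2).smul_left a
  rw [Matrix.exp_add_of_commute _ M2 ((cA2.add_left c02).add_left c12),
    Matrix.exp_add_of_commute _ M1 (cA1.add_left c01),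
    Matrix.exp_add_of_commute _ M0 cA]
  have hexp1 : NormedSpace.exp (a • (1 : Matrix (Fin 4) (Fin 4) ℝ))
      = Real.exp a • (1 : Matrix (Fin 4) (Fin 4) ℝ) := by
    letI : SeminormedRing (Matrix (Fin 4) (Fin 4) ℝ) := Matrix.linftyOpSemiNormedRing
    letI : NormedRing (Matrix (Fin 4) (Fin 4) ℝ) := Matrix.linftyOpNormedRing
    letI : NormedAlgebra ℝ (Matrix (Fin 4) (Fin 4) ℝ) := Matrix.linftyOpNormedAlgebra
    rw [← Algebra.algebraMap_eq_smul_one, ← Algebra.algebraMap_eq_smul_one,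
      Real.exp_eq_exp_ℝ]
    exact (NormedSpace.algebraMap_exp_comm (𝔸 := Matrix (Fin 4) (Fin 4) ℝ) a).symm
  rw [hexp1, Matrix.smul_mul, Matrix.one_mul, Matrix.smul_mul, Matrix.smul_mul]
end

section
/- The map ψ sending (g,h) ∈ sl(2,ℝ) × sl(2,ℝ) to the matrix (in the basis {E₁₁, E₁₂, -E₂₁, E₂₂} of gl(2,ℝ)) of the linear map X ↦ g·X - X·h is a Lie algebra isomorphism onto the perskewsymmetric Lie algebra p(4,ℝ) = {A : Aᵀ·R₄ + R₄·A = 0}. -/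
open Matrix

/-- The basis `{E₁₁, E₁₂, -E₂₁, E₂₂}` identifying `gl(2, ℝ)` with `ℝ⁴`. -/
def glBasis : Fin 4 → Matrix (Fin 2) (Fin 2) ℝ :=
  ![Matrix.single 0 0 1, Matrix.single 0 1 1,
    -Matrix.single 1 0 1, Matrix.single 1 1 1]

/-- Coordinates of a `2 × 2` real matrix in the basis `{E₁₁, E₁₂, -E₂₁, E₂₂}`. -/
def glCoord (X : Matrix (Fin 2) (Fin 2) ℝ) : Fin 4 → ℝ :=
  ![X 0 0, X 0 1, -X 1 0, X 1 1]

/-- The `4 × 4` reversal matrix, with ones on the anti-diagonal and zeros elsewhere. -/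
def R4 : Matrix (Fin 4) (Fin 4) ℝ :=
  Matrix.of fun i j => if (i : ℕ) + (j : ℕ) = 3 then 1 else 0

/-- `ψ (g, h)` is the matrix, in the basis `{E₁₁, E₁₂, -E₂₁, E₂₂}`, of `X ↦ g * X - X * h`. -/
def psi (g h : Matrix (Fin 2) (Fin 2) ℝ) : Matrix (Fin 4) (Fin 4) ℝ :=
  Matrix.of fun k l => glCoord (g * glBasis l - glBasis l * h) k

lemma psi_eq (g h : Matrix (Fin 2) (Fin 2) ℝ) : psi g h =
    !![g 0 0 - h 0 0, -h 1 0, -g 0 1, 0;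
       -h 0 1, g 0 0 - h 1 1, 0, g 0 1;
       -g 1 0, 0, g 1 1 - h 0 0, h 1 0;
       0, g 1 0, h 0 1, g 1 1 - h 1 1] := by
  ext i j
  fin_cases i <;> fin_cases j <;>
    simp [psi, glBasis, glCoord, Matrix.mul_apply, Fin.sum_univ_succ,
      Matrix.single] <;> ring

lemma psiT_eq (g h : Matrix (Fin 2) (Fin 2) ℝ) : (psi g h)ᵀ =
    !![g 0 0 - h 0 0, -h 0 1, -g 1 0, 0;
       -h 1 0, g 0 0 - h 1 1, 0, g 1 0;
       -g 0 1, 0, g 1 1 - h 0 0, h 0 1;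
       0, g 0 1, h 1 0, g 1 1 - h 1 1] := by
  rw [psi_eq]
  ext i j
  fin_cases i <;> fin_cases j <;> rfl

lemma R4_eq : R4 = !![0,0,0,1; 0,0,1,0; 0,1,0,0; 1,0,0,0] := by
  ext i j
  fin_cases i <;> fin_cases j <;> rfl

set_option maxHeartbeats 4000000 in
/-- `ψ : sl(2, ℝ) × sl(2, ℝ) → p(4, ℝ)` is a Lie algebra isomorphism: it lands in the
perskewsymmetric Lie algebra `{A : Aᵀ R₄ + R₄ A = 0}`, intertwines the brackets, and is
bijective onto `p(4, ℝ)` when restricted to traceless pairs. -/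
theorem psi_lie_algebra_iso :
    (∀ g h : Matrix (Fin 2) (Fin 2) ℝ, g.trace = 0 → h.trace = 0 →
      (psi g h)ᵀ * R4 + R4 * psi g h = 0) ∧
    (∀ g h g' h' : Matrix (Fin 2) (Fin 2) ℝ,
      psi (g * g' - g' * g) (h * h' - h' * h) = psi g h * psi g' h' - psi g' h' * psi g h) ∧
    (∀ g h g' h' : Matrix (Fin 2) (Fin 2) ℝ, g.trace = 0 → h.trace = 0 →
      g'.trace = 0 → h'.trace = 0 → psi g h = psi g' h' → g = g' ∧ h = h') ∧
    (∀ A : Matrix (Fin 4) (Fin 4) ℝ, Aᵀ * R4 + R4 * A = 0 →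
      ∃ g h : Matrix (Fin 2) (Fin 2) ℝ, g.trace = 0 ∧ h.trace = 0 ∧ psi g h = A) := by
  refine ⟨?_, ?_, ?_, ?_⟩
  · intro g h hg hh
    rw [Matrix.trace_fin_two] at hg hh
    rw [psiT_eq, psi_eq, R4_eq]
    ext i j
    fin_cases i <;> fin_cases j <;>
      simp [Matrix.mul_apply, Fin.sum_univ_four] <;> linarith
  · intro g h g' h'
    rw [psi_eq, psi_eq, psi_eq]
    ext i j
    fin_cases i <;> fin_cases j <;>
      simp [Matrix.mul_apply, Fin.sum_univ_four, Fin.sum_univ_two] <;> ring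
  · intro g h g' h' hg hh hg' hh' heq
    rw [Matrix.trace_fin_two] at hg hh hg' hh'
    rw [psi_eq, psi_eq] at heq
    have e := fun i j => congrFun (congrFun heq i) j
    have e00 := e 0 0; have e01 := e 0 1; have e02 := e 0 2
    have e10 := e 1 0; have e11 := e 1 1; have e20 := e 2 0
    have e23 := e 2 3; have e31 := e 3 1; have e32 := e 3 2
    simp [Matrix.vecHead, Matrix.vecTail] at e00 e01 e02 e10 e11 e20 e23 e31 e32
    constructor <;> (ext i j; fin_cases i <;> fin_cases j <;> simp <;> linarith)
  · intro A hA
    rw [R4_eq] at hA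
    have e := fun i j => congrFun (congrFun hA i) j
    have e00 := e 0 0; have e01 := e 0 1; have e02 := e 0 2; have e03 := e 0 3
    have e11 := e 1 1; have e12 := e 1 2; have e22 := e 2 2
    have e31 := e 3 1; have e32 := e 3 2; have e33 := e 3 3
    simp [Matrix.add_apply, Matrix.mul_apply, Matrix.transpose_apply, Fin.sum_univ_four,
      Matrix.vecHead, Matrix.vecTail, Matrix.vecMul, dotProduct]
      at e00 e01 e02 e03 e11 e12 e22 e31 e32 e33
    refine ⟨!![(A 0 0 + A 1 1)/2, -A 0 2; -A 2 0, -(A 0 0 + A 1 1)/2],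
            !![(A 1 1 - A 0 0)/2, -A 1 0; -A 0 1, -(A 1 1 - A 0 0)/2], ?_, ?_, ?_⟩
    · simp [Matrix.trace_fin_two]; ring
    · simp [Matrix.trace_fin_two]; ring
    · rw [psi_eq]
      ext i j
      fin_cases i <;> fin_cases j <;> simp <;> linarith
end
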